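/- arXiv:2210.06272 — 2 statements merged into one kernel-verified Lean document; each statement's English description precedes it below -/
import Mathlib

section
/- Let n, m, r be positive integers, and let A ∈ ℝ^{r×r}, B ∈ ℝ^{r×m}, C ∈ ℝ^{n×r} be real matrices (with ‖·‖ the ℓ²-operator norm on matrices and the Euclidean norm on vectors). Let g : ℝ^n → ℝ^r be Lipschitz continuous with constant μ_g ≥ 0. Let x_{k−2}, x_{k−1}, x_k ∈ ℝ^n and u_{k−2}, u_{k−1} ∈ ℝ^m satisfy ‖x_{k−1} − x_{k−2}‖ ≤ μ_x, ‖x_k − x_{k−1}‖ ≤ μ_x, and ‖u_{k−1} − u_{k−2}‖ ≤ μ_u. Define the residuals ε := g(x_{k−1}) − (A g(x_{k−2}) + B u_{k−2}) and ε̄ := x_{k−1} − C g(x_{k−1}), and the one-step prediction x̂_k := C (A g(x_{k−1}) + B u_{k−1}). Then the estimation error e_k := x̂_k − x_k satisfies ‖e_k‖ ≤ ‖C A‖ μ_g μ_x + ‖C B‖ μ_u + ‖C‖ · ‖ε‖ + μ_x + ‖ε̄‖. -/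
/-- Finite-network one-step error-decomposition bound (inequality (p1p) in the
proof of Theorem 1 of the paper). Matrices are encoded as continuous linear
maps between Euclidean spaces, whose operator norm is the ℓ²-operator norm. -/
theorem one_step_error_bound
    (n m r : ℕ) (hn : 0 < n) (hm : 0 < m) (hr : 0 < r)
    (A : EuclideanSpace ℝ (Fin r) →L[ℝ] EuclideanSpace ℝ (Fin r))
    (B : EuclideanSpace ℝ (Fin m) →L[ℝ] EuclideanSpace ℝ (Fin r))
    (C : EuclideanSpace ℝ (Fin r) →L[ℝ] EuclideanSpace ℝ (Fin n))
    (g : EuclideanSpace ℝ (Fin n) → EuclideanSpace ℝ (Fin r))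
    (μg μx μu : ℝ) (hμg : 0 ≤ μg)
    (hg : ∀ x y : EuclideanSpace ℝ (Fin n), ‖g x - g y‖ ≤ μg * ‖x - y‖)
    (xkm2 xkm1 xk : EuclideanSpace ℝ (Fin n))
    (ukm2 ukm1 : EuclideanSpace ℝ (Fin m))
    (hx1 : ‖xkm1 - xkm2‖ ≤ μx) (hx2 : ‖xk - xkm1‖ ≤ μx)
    (hu : ‖ukm1 - ukm2‖ ≤ μu)
    (ε : EuclideanSpace ℝ (Fin r)) (hε : ε = g xkm1 - (A (g xkm2) + B ukm2))
    (εbar : EuclideanSpace ℝ (Fin n)) (hεbar : εbar = xkm1 - C (g xkm1))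
    (xhatk : EuclideanSpace ℝ (Fin n)) (hxhat : xhatk = C (A (g xkm1) + B ukm1))
    (ek : EuclideanSpace ℝ (Fin n)) (hek : ek = xhatk - xk) :
    ‖ek‖ ≤ ‖C.comp A‖ * μg * μx + ‖C.comp B‖ * μu + ‖C‖ * ‖ε‖ + μx + ‖εbar‖ := by
  subst hxhat hek
  have key : C (A (g xkm1) + B ukm1) - xk =
      (C.comp A) (g xkm1 - g xkm2) + (C.comp B) (ukm1 - ukm2)
      + (- C ε) + (xkm1 - xk) + (- εbar) := by
    subst hε hεbar
    simp only [ContinuousLinearMap.comp_apply, map_add, map_sub]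
    abel
  rw [key]
  have h1 : ‖(C.comp A) (g xkm1 - g xkm2)‖ ≤ ‖C.comp A‖ * μg * μx := by
    calc ‖(C.comp A) (g xkm1 - g xkm2)‖ ≤ ‖C.comp A‖ * ‖g xkm1 - g xkm2‖ :=
          (C.comp A).le_opNorm _
      _ ≤ ‖C.comp A‖ * (μg * μx) := by
          refine mul_le_mul_of_nonneg_left ?_ (norm_nonneg _)
          exact (hg _ _).trans (mul_le_mul_of_nonneg_left hx1 hμg)
      _ = ‖C.comp A‖ * μg * μx := by ring
  have h2 : ‖(C.comp B) (ukm1 - ukm2)‖ ≤ ‖C.comp B‖ * μu := by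
    calc ‖(C.comp B) (ukm1 - ukm2)‖ ≤ ‖C.comp B‖ * ‖ukm1 - ukm2‖ :=
          (C.comp B).le_opNorm _
      _ ≤ ‖C.comp B‖ * μu := mul_le_mul_of_nonneg_left hu (norm_nonneg _)
  have h3 : ‖-C ε‖ ≤ ‖C‖ * ‖ε‖ := by rw [norm_neg]; exact C.le_opNorm _
  have h4 : ‖xkm1 - xk‖ ≤ μx := by rw [← norm_neg]; simpa using hx2
  have h5 : ‖-εbar‖ ≤ ‖εbar‖ := le_of_eq (norm_neg _)
  calc ‖(C.comp A) (g xkm1 - g xkm2) + (C.comp B) (ukm1 - ukm2) + (- C ε)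
        + (xkm1 - xk) + (- εbar)‖
      ≤ ‖(C.comp A) (g xkm1 - g xkm2)‖ + ‖(C.comp B) (ukm1 - ukm2)‖ + ‖- C ε‖
        + ‖xkm1 - xk‖ + ‖- εbar‖ := by
        exact (norm_add_le _ _).trans (add_le_add (
          (norm_add_le _ _).trans (add_le_add (
            (norm_add_le _ _).trans (add_le_add (norm_add_le _ _) le_rfl)) le_rfl)) le_rfl)
    _ ≤ ‖C.comp A‖ * μg * μx + ‖C.comp B‖ * μu + ‖C‖ * ‖ε‖ + μx + ‖εbar‖ := by
        exact add_le_add (add_le_add (add_le_add (add_le_add h1 h2) h3) h4) h5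
end

section
/- Let r be a positive integer, let a ∈ ℝ with 0 ≤ a < 1, let (A_n)_{n∈ℕ} be a sequence of matrices in ℝ^{r×r} with ℓ²-operator norm ‖A_n‖ ≤ a for all n, and let (β_n)_{n∈ℕ} be a sequence of positive integers. Then for every integer τ ≥ 1, ‖ Σ_{l=1}^{τ−1} Σ_{m=1}^{β_{l−1}} ( Π_{n=l}^{τ−1} A_n^{β_n} ) · A_{l−1}^{m} ‖ ≤ a² / (1 − a)². In particular, these sums are bounded uniformly in τ. -/
open Finset

/-!
Every batch factor `A_n ^ β_n` with `β_n ≥ 1` has norm at most `a`, so by submultiplicativity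
the `(l, m)` term has norm at most `a ^ (τ - l) * a ^ m`. The double sum is therefore dominated
by the product of two geometric tails `∑_{k ≥ 1} a ^ k = a / (1 - a)`.
-/

section NormBounds

variable {R : Type*} [SeminormedRing R] {a : ℝ}

theorem norm_pow_le_pow_of_norm_le {x : R} (hx : ‖x‖ ≤ a) {n : ℕ} (hn : n ≠ 0) :
    ‖x ^ n‖ ≤ a ^ n :=
  (norm_pow_le' x (Nat.pos_of_ne_zero hn)).trans (pow_le_pow_left₀ (norm_nonneg x) hx n)

theorem norm_pow_le_of_norm_le_of_le_one {x : R} (hx : ‖x‖ ≤ a) (ha1 : a ≤ 1) {n : ℕ}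
    (hn : n ≠ 0) : ‖x ^ n‖ ≤ a :=
  (norm_pow_le_pow_of_norm_le hx hn).trans
    (pow_le_of_le_one ((norm_nonneg x).trans hx) ha1 hn)

/-- Multiplying by `x` on the right avoids the need for `‖1‖ ≤ 1` when `l` is empty. -/
theorem norm_list_prod_mul_le_pow (ha0 : 0 ≤ a) (l : List R) (hl : ∀ y ∈ l, ‖y‖ ≤ a)
    (x : R) : ‖l.prod * x‖ ≤ a ^ l.length * ‖x‖ := by
  induction l with
  | nil => simp
  | cons y l ih =>
    rw [List.forall_mem_cons] at hl
    calc ‖(y :: l).prod * x‖ = ‖y * (l.prod * x)‖ := by rw [List.prod_cons, mul_assoc]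
      _ ≤ ‖y‖ * ‖l.prod * x‖ := norm_mul_le _ _
      _ ≤ a * (a ^ l.length * ‖x‖) :=
        mul_le_mul hl.1 (ih hl.2) (norm_nonneg _) ha0
      _ = a ^ (y :: l).length * ‖x‖ := by rw [List.length_cons, pow_succ]; ring

end NormBounds

section GeometricSums

variable {a : ℝ}

theorem sum_Icc_one_pow_le (ha0 : 0 ≤ a) (ha1 : a < 1) (n : ℕ) :
    ∑ m ∈ Icc 1 n, a ^ m ≤ a / (1 - a) := by
  rw [← Ico_add_one_right_eq_Icc]
  simpa using geom_sum_Ico_le_of_lt_one (m := 1) (n := n + 1) ha0 ha1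

theorem sum_Icc_one_pow_sub_le (ha0 : 0 ≤ a) (ha1 : a < 1) (τ : ℕ) :
    ∑ l ∈ Icc 1 (τ - 1), a ^ (τ - l) ≤ a / (1 - a) := by
  have hIcc : Icc 1 (τ - 1) = Ico 1 τ := by ext; simp only [mem_Icc, mem_Ico]; omega
  rw [hIcc, sum_Ico_reflect (a ^ ·) 1 (Nat.le_succ τ), Nat.add_sub_cancel_left,
    Nat.add_sub_cancel, ← hIcc]
  exact sum_Icc_one_pow_le ha0 ha1 _

end GeometricSums

theorem multi_batch_sum_bounded_general
    (r : ℕ)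
    (a : ℝ) (ha1 : a < 1)
    (A : ℕ → (EuclideanSpace ℝ (Fin r) →L[ℝ] EuclideanSpace ℝ (Fin r)))
    (hA : ∀ n, ‖A n‖ ≤ a)
    (β : ℕ → ℕ) (hβ : ∀ n, 0 < β n) :
    ∀ τ : ℕ, 1 ≤ τ →
      ‖∑ l ∈ Finset.Icc 1 (τ - 1), ∑ m ∈ Finset.Icc 1 (β (l - 1)),
          (((List.range' l (τ - l)).reverse.map (fun n => A n ^ β n)).prod
            * A (l - 1) ^ m)‖
        ≤ a ^ 2 / (1 - a) ^ 2 := by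
  intro τ _
  have ha0 : 0 ≤ a := (norm_nonneg _).trans (hA 0)
  have hbatch : ∀ l, ∀ y ∈ (List.range' l (τ - l)).reverse.map (fun n => A n ^ β n), ‖y‖ ≤ a :=
    fun _ => List.forall_mem_map.2 fun n _ =>
      norm_pow_le_of_norm_le_of_le_one (hA n) ha1.le (hβ n).ne'
  calc _ ≤ ∑ l ∈ Icc 1 (τ - 1), ∑ m ∈ Icc 1 (β (l - 1)), a ^ (τ - l) * a ^ m := by
        refine norm_sum_le_of_le _ fun l _ => norm_sum_le_of_le _ fun m hm => ?_
        refine (norm_list_prod_mul_le_pow ha0 _ (hbatch l) _).trans ?_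
        simpa using mul_le_mul_of_nonneg_left
          (norm_pow_le_pow_of_norm_le (hA (l - 1)) (Nat.one_le_iff_ne_zero.1 (mem_Icc.1 hm).1)) (pow_nonneg ha0 _)
    _ ≤ ∑ l ∈ Icc 1 (τ - 1), a ^ (τ - l) * (a / (1 - a)) := by
        gcongr with l
        rw [← mul_sum]
        exact mul_le_mul_of_nonneg_left (sum_Icc_one_pow_le ha0 ha1 _) (pow_nonneg ha0 _)
    _ ≤ a / (1 - a) * (a / (1 - a)) := by
        rw [← sum_mul]
        exact mul_le_mul_of_nonneg_right (sum_Icc_one_pow_sub_le ha0 ha1 τ)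
          (div_nonneg ha0 (sub_nonneg.2 ha1.le))
    _ = a ^ 2 / (1 - a) ^ 2 := by rw [div_mul_div_comm, sq, sq]

/-- Uniform boundedness of the multi-batch error-accumulation factor
(supporting Corollary 1 of the paper). Matrices with the ℓ²-operator norm are
encoded as continuous linear maps on Euclidean space; the ordered product
`Π_{n=l}^{τ−1} A_n^{β_n} = A_{τ−1}^{β_{τ−1}} ⋯ A_l^{β_l}` is formed as a list
product over the indices `τ−1, …, l`. -/
theorem multi_batch_sum_bounded
    (r : ℕ) (hr : 0 < r)
    (a : ℝ) (ha0 : 0 ≤ a) (ha1 : a < 1)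
    (A : ℕ → (EuclideanSpace ℝ (Fin r) →L[ℝ] EuclideanSpace ℝ (Fin r)))
    (hA : ∀ n, ‖A n‖ ≤ a)
    (β : ℕ → ℕ) (hβ : ∀ n, 0 < β n) :
    ∀ τ : ℕ, 1 ≤ τ →
      ‖∑ l ∈ Finset.Icc 1 (τ - 1), ∑ m ∈ Finset.Icc 1 (β (l - 1)),
          (((List.range' l (τ - l)).reverse.map (fun n => A n ^ β n)).prod
            * A (l - 1) ^ m)‖
        ≤ a ^ 2 / (1 - a) ^ 2 :=
  multi_batch_sum_bounded_general r a ha1 A hA β hβ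
end
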